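/- Let X_1,…,X_n be a regular collage system (straight-line program) over a finite alphabet Σ deriving the string T = val(X_n). Define vOcc : {1,…,n} → ℕ by vOcc(n) = 1 and, for i < n, vOcc(i) = Σ_{j : X_j = X_i X_r} vOcc(j) + Σ_{j : X_j = X_ℓ X_i} vOcc(j), where an assignment X_j = X_i X_i contributes 2·vOcc(j). Then for every integer q ≥ 2 and every string P over Σ with |P| = q: |Occ(T,P)| = Σ_{i : X_i = X_ℓ X_r} vOcc(i) · |Occ(suf(val(X_ℓ),q−1)·pre(val(X_r),q−1), P)|. -/

import Mathlib

/-!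
Cutting `val(X_i) = val(X_ℓ) val(X_r)` at the boundary splits the occurrences of `P`
(with `|P| ≥ 1`) into those inside `val(X_ℓ)`, those inside `val(X_r)`, and those
crossing the boundary, which are exactly the occurrences in
`suf(val(X_ℓ), |P|-1) pre(val(X_r), |P|-1)`; terminals contain no occurrence when `|P| ≥ 2`.
So `g i = |Occ(val(X_i), P)|` satisfies `g = f + C g`, where `C` is the reference matrix of
the SLP and `f` the crossing counts, while `vOcc = e_n + vOcc C`. Pairing the two
equations with `g` and `vOcc` gives `g n = vOcc · f`.
-/

/-- `Occ T P` is the set of (1-based) occurrence positions of `P` in `T`: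
`{ i : 1 ≤ i ≤ |T|−|P|+1 and T[i:i+|P|−1] = P }`. -/
def Occ {α : Type*} [DecidableEq α] (T P : List α) : Finset ℕ :=
  (Finset.Icc 1 (T.length - P.length + 1)).filter
    (fun i => (T.drop (i - 1)).take P.length = P)

/-- `pre T k = T[1:min(k,|T|)]`, the prefix of `T` of length at most `k`. -/
def pre {α : Type*} (T : List α) (k : ℕ) : List α := T.take k

/-- `suf T k = T[|T|−min(k,|T|)+1:|T|]`, the suffix of `T` of length at most `k`. -/
def suf {α : Type*} (T : List α) (k : ℕ) : List α := T.drop (T.length - k)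

/-- `listPow w p` is the `p`-fold concatenation `w^p`. -/
def listPow {α : Type*} (w : List α) : ℕ → List α
  | 0 => []
  | p + 1 => w ++ listPow w p

/-- An assignment of a regular collage system (straight-line program) with variables
indexed by `Fin n`: a terminal symbol or a concatenation of two variables. -/
inductive SLPExpr (α : Type*) (n : ℕ) where
  | term : α → SLPExpr α n
  | concat : Fin n → Fin n → SLPExpr α n

/-- How many times the assignment `e` references variable `i`
(`X_j = X_i X_i` counts twice). -/
def SLPExpr.refCount {α : Type*} {n : ℕ} (e : SLPExpr α n) (i : Fin n) : ℕ :=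
  match e with
  | .term _ => 0
  | .concat l r => (if l = i then 1 else 0) + (if r = i then 1 else 0)

namespace Matrix

variable {ι R : Type*} [Fintype ι] [DecidableEq ι] [Semiring R] [IsRightCancelAdd R]

theorem apply_eq_dotProduct_of_eq_add_mulVec (C : Matrix ι ι R) {w g f : ι → R} {top : ι}
    (hw : w = Pi.single top 1 + w ᵥ* C) (hg : g = f + C *ᵥ g) :
    g top = w ⬝ᵥ f := by
  have hleft : w ⬝ᵥ g = g top + (w ᵥ* C) ⬝ᵥ g := by
    conv_lhs => rw [hw]
    rw [add_dotProduct, single_one_dotProduct]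
  have hright : w ⬝ᵥ g = w ⬝ᵥ f + (w ᵥ* C) ⬝ᵥ g := by
    conv_lhs => rw [hg]
    rw [dotProduct_add, dotProduct_mulVec]
  exact add_right_cancel (hleft.symm.trans hright)

end Matrix

theorem SLPExpr.sum_refCount_concat_mul {α : Type*} {n : ℕ} (l r : Fin n) (g : Fin n → ℕ) :
    ∑ k, (SLPExpr.concat (α := α) l r).refCount k * g k = g l + g r := by
  simp only [SLPExpr.refCount, add_mul, ite_mul, one_mul, zero_mul, Finset.sum_add_distrib,
    Finset.sum_ite_eq, Finset.mem_univ, if_true]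

theorem SLPExpr.refCount_eq_zero_of_le {α : Type*} {n : ℕ} {e : SLPExpr α n} {j i : Fin n}
    (he : match e with
      | .term _ => True
      | .concat l r => l < j ∧ r < j)
    (hji : j ≤ i) : e.refCount i = 0 := by
  cases e with
  | term => rfl
  | concat l r => simp [SLPExpr.refCount, (he.1.trans_le hji).ne, (he.2.trans_le hji).ne]

section Occurrences

variable {α : Type*}

theorem add_length_le_of_take_drop_eq {T P : List α} {i : ℕ} (hP : P ≠ [])
    (h : (T.drop i).take P.length = P) : i + P.length ≤ T.length := by
  have := congrArg List.length h
  simp only [List.length_take, List.length_drop] at this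
  have := List.length_pos_iff.2 hP
  omega

/-- A window of length `|P|` starting at `i ≥ |u| - (|P| - 1)` inside `u` reads the same in
`u ++ v` and in `suf u (|P| - 1) ++ pre v (|P| - 1)`. -/
theorem take_drop_suf_append_pre {u v P : List α} {i : ℕ}
    (hs : u.length - (P.length - 1) ≤ i) (hi : i < u.length) :
    ((suf u (P.length - 1) ++ pre v (P.length - 1)).drop (i - (u.length - (P.length - 1)))).take
        P.length = ((u ++ v).drop i).take P.length := by
  rw [suf, pre, List.drop_append_of_le_length (by simp; omega), List.drop_drop,
    Nat.add_sub_cancel' hs, List.drop_append_of_le_length hi.le, List.take_append,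
    List.take_append, List.take_take]
  congr 2
  simp only [List.length_drop]
  omega

variable [DecidableEq α]

/-- The occurrence positions of `P` in `T`, counted from `0` instead of `1` as in `Occ`. -/
def occPos (T P : List α) : Finset ℕ :=
  (Finset.range T.length).filter (fun i => (T.drop i).take P.length = P)

theorem mem_occPos {T P : List α} {i : ℕ} (hP : P ≠ []) :
    i ∈ occPos T P ↔ (T.drop i).take P.length = P := by
  refine ⟨fun h => (Finset.mem_filter.1 h).2, fun h => Finset.mem_filter.2 ⟨?_, h⟩⟩
  have := add_length_le_of_take_drop_eq hP h
  have := List.length_pos_iff.2 hP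
  exact Finset.mem_range.2 (by omega)

theorem Occ_eq_map_occPos {T P : List α} (hP : P ≠ []) :
    Occ T P = (occPos T P).map (addRightEmbedding 1) := by
  ext i
  simp only [Occ, Finset.mem_filter, Finset.mem_Icc, Finset.mem_map, mem_occPos hP,
    addRightEmbedding_apply]
  constructor
  · rintro ⟨⟨hi, -⟩, h⟩
    exact ⟨i - 1, h, by omega⟩
  · rintro ⟨j, h, rfl⟩
    have := add_length_le_of_take_drop_eq hP h
    exact ⟨⟨by omega, by omega⟩, by simpa using h⟩

theorem occPos_eq_empty_of_length_lt {T P : List α} (h : T.length < P.length) :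
    occPos T P = ∅ := by
  refine Finset.eq_empty_of_forall_notMem fun i hi => ?_
  have hP : P ≠ [] := List.ne_nil_of_length_pos (by omega)
  have := add_length_le_of_take_drop_eq hP ((mem_occPos hP).1 hi)
  omega

theorem filter_occPos_append_left {u v P : List α} (hP : P ≠ []) :
    (occPos (u ++ v) P).filter (· + P.length ≤ u.length) = occPos u P := by
  ext i
  simp only [Finset.mem_filter, mem_occPos hP]
  constructor
  · rintro ⟨h, hi⟩
    rwa [List.drop_append_of_le_length (by omega),
      List.take_append_of_le_length (by simp; omega)] at h
  · intro h
    have hi := add_length_le_of_take_drop_eq hP h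
    refine ⟨?_, hi⟩
    rwa [List.drop_append_of_le_length (by omega),
      List.take_append_of_le_length (by simp; omega)]

theorem filter_occPos_append_right {u v P : List α} (hP : P ≠ []) :
    (occPos (u ++ v) P).filter (u.length ≤ ·) = (occPos v P).map (addLeftEmbedding u.length) := by
  ext i
  simp only [Finset.mem_filter, Finset.mem_map, mem_occPos hP, addLeftEmbedding_apply]
  constructor
  · rintro ⟨h, hi⟩
    obtain ⟨j, rfl⟩ := Nat.exists_eq_add_of_le hi
    exact ⟨j, by rwa [List.drop_length_add_append] at h, rfl⟩
  · rintro ⟨j, h, rfl⟩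
    exact ⟨by rwa [List.drop_length_add_append], by omega⟩

theorem filter_occPos_append_cross {u v P : List α} (hP : P ≠ []) :
    (occPos (u ++ v) P).filter (fun i => i < u.length ∧ u.length < i + P.length) =
      (occPos (suf u (P.length - 1) ++ pre v (P.length - 1)) P).map
        (addLeftEmbedding (u.length - (P.length - 1))) := by
  have hq := List.length_pos_iff.2 hP
  ext i
  simp only [Finset.mem_filter, Finset.mem_map, mem_occPos hP, addLeftEmbedding_apply]
  constructor
  · rintro ⟨h, hi, hcross⟩
    refine ⟨i - (u.length - (P.length - 1)), ?_, by omega⟩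
    rwa [take_drop_suf_append_pre (by omega) hi]
  · rintro ⟨j, h, rfl⟩
    have hj := add_length_le_of_take_drop_eq hP h
    simp only [suf, pre, List.length_append, List.length_drop, List.length_take] at hj
    rw [← Nat.add_sub_cancel_left (n := u.length - (P.length - 1)) (m := j),
      take_drop_suf_append_pre (by omega) (by omega)] at h
    exact ⟨h, by omega, by omega⟩

theorem card_occPos_append {u v P : List α} (hP : P ≠ []) :
    (occPos (u ++ v) P).card = (occPos u P).card + (occPos v P).card +
      (occPos (suf u (P.length - 1) ++ pre v (P.length - 1)) P).card := by
  set S := occPos (u ++ v) P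
  have hq := List.length_pos_iff.2 hP
  have hsplit : S.card = (S.filter (· + P.length ≤ u.length)).card +
      (S.filter (u.length ≤ ·)).card +
      (S.filter (fun i => i < u.length ∧ u.length < i + P.length)).card := by
    have hfit := Finset.card_filter_add_card_filter_not (s := S) (· + P.length ≤ u.length)
    have hrest := Finset.card_filter_add_card_filter_not
      (s := S.filter fun i => ¬i + P.length ≤ u.length) (u.length ≤ ·)
    rw [Finset.filter_filter, Finset.filter_filter] at hrest
    rw [Finset.filter_congr (p := fun i => ¬i + P.length ≤ u.length ∧ u.length ≤ i)
        (q := (u.length ≤ ·)) fun i _ => by omega,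
      Finset.filter_congr (p := fun i => ¬i + P.length ≤ u.length ∧ ¬u.length ≤ i)
        (q := fun i => i < u.length ∧ u.length < i + P.length) fun i _ => by omega] at hrest
    omega
  rw [hsplit, filter_occPos_append_left hP, filter_occPos_append_right hP,
    filter_occPos_append_cross hP, Finset.card_map, Finset.card_map]

theorem card_Occ_eq_card_occPos {T P : List α} (hP : P ≠ []) :
    (Occ T P).card = (occPos T P).card := by
  rw [Occ_eq_map_occPos hP, Finset.card_map]

theorem card_Occ_append {u v P : List α} (hP : P ≠ []) :
    (Occ (u ++ v) P).card = (Occ u P).card + (Occ v P).card +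
      (Occ (suf u (P.length - 1) ++ pre v (P.length - 1)) P).card := by
  simp only [card_Occ_eq_card_occPos hP]
  exact card_occPos_append hP

theorem Occ_eq_empty_of_length_lt {T P : List α} (h : T.length < P.length) : Occ T P = ∅ := by
  have hP : P ≠ [] := List.ne_nil_of_length_pos (by omega)
  rw [Occ_eq_map_occPos hP, occPos_eq_empty_of_length_lt h, Finset.map_empty]

end Occurrences

/-- `q`-gram frequencies on a regular collage system (SLP).
`expr` gives the assignments (each referring only to earlier variables), `val` their
derived strings, `T = val(X_n)`, and `vOcc` counts occurrences of each variable in the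
derivation tree: `vOcc(n) = 1` and for `i < n`,
`vOcc(i) = Σ_{j : X_j = X_i X_r} vOcc(j) + Σ_{j : X_j = X_ℓ X_i} vOcc(j)`.
Then `|Occ(T,P)| = Σ_{i : X_i = X_ℓ X_r} vOcc(i)·|Occ(suf(val(X_ℓ),q−1)·pre(val(X_r),q−1),P)|`. -/
theorem qgram_frequencies_on_SLP {α : Type*} [DecidableEq α]
    (n : ℕ) (hn : 0 < n)
    (expr : Fin n → SLPExpr α n) (val : Fin n → List α) (vOcc : Fin n → ℕ)
    (hwf : ∀ i : Fin n, match expr i with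
      | .term _ => True
      | .concat l r => l < i ∧ r < i)
    (hval : ∀ i : Fin n, val i = match expr i with
      | .term a => [a]
      | .concat l r => val l ++ val r)
    (hlast : vOcc ⟨n - 1, by omega⟩ = 1)
    (hvOcc : ∀ i : Fin n, (i : ℕ) + 1 < n →
      vOcc i = ∑ j : Fin n, vOcc j * (expr j).refCount i)
    (q : ℕ) (hq : 2 ≤ q) (P : List α) (hP : P.length = q) :
    (Occ (val ⟨n - 1, by omega⟩) P).card =
      ∑ i : Fin n, vOcc i *
        (match expr i with
         | .term _ => 0
         | .concat l r =>
            (Occ (suf (val l) (q - 1) ++ pre (val r) (q - 1)) P).card) := by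
  set top : Fin n := ⟨n - 1, by omega⟩
  have hP₀ : P ≠ [] := List.ne_nil_of_length_pos (by omega)
  let C : Matrix (Fin n) (Fin n) ℕ := Matrix.of fun j i => (expr j).refCount i
  have hC_top (j : Fin n) : C j top = 0 :=
    SLPExpr.refCount_eq_zero_of_le (hwf j) (Fin.le_iff_val_le_val.2 (by simp only [top]; omega))
  refine Matrix.apply_eq_dotProduct_of_eq_add_mulVec (g := fun i => (Occ (val i) P).card) C
    (funext fun i => ?_) (funext fun i => ?_)
  · by_cases hi : i = top
    · subst hi
      simp [Matrix.vecMul, dotProduct, hC_top, hlast]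
    · have hi_lt : (i : ℕ) + 1 < n := by
        have := Fin.val_ne_of_ne hi
        simp only [top] at this
        omega
      simp [hi, hvOcc i hi_lt, Matrix.vecMul, dotProduct, C]
  · have hval_i := hval i
    rcases hexp : expr i with a | ⟨l, r⟩ <;> simp only [hexp] at hval_i
    · simp [hval_i, Occ_eq_empty_of_length_lt (T := [a]) (P := P) (by simp; omega),
        Matrix.mulVec, dotProduct, C, hexp, SLPExpr.refCount]
    · rw [hval_i, card_Occ_append hP₀, hP]
      simp only [Pi.add_apply, Matrix.mulVec, dotProduct, C, Matrix.of_apply, hexp,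
        SLPExpr.sum_refCount_concat_mul]
      ring
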